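/- If G is a triangle-free graph in W₂, then the independence complex Δ(G) is Eulerian; that is, Δ(G) is pure and for every face F (including the empty face), the reduced Euler characteristic of the link of F in Δ(G) equals (−1)^{dim lk F}. -/

import Mathlib

open Finset

section EdgeIdealPaper

variable {V : Type*} [Fintype V] [DecidableEq V]

/-- `S` is an independent set of vertices in `G`. -/
def IsIndep (G : SimpleGraph V) (S : Finset V) : Prop :=
  ∀ u ∈ S, ∀ v ∈ S, ¬ G.Adj u v

/-- `S` is a maximal independent set of the induced subgraph of `G` on `A`. -/
def IsMaxIndepIn (G : SimpleGraph V) (A S : Finset V) : Prop :=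
  S ⊆ A ∧ IsIndep G S ∧ ∀ v ∈ A, v ∉ S → ¬ IsIndep G (insert v S)

open scoped Classical in
/-- The independence number of the induced subgraph of `G` on `A`. -/
noncomputable def alphaIn (G : SimpleGraph V) (A : Finset V) : ℕ :=
  ((A.powerset).filter (fun S => IsIndep G S)).sup Finset.card

/-- The induced subgraph of `G` on `A` is well-covered. -/
def WellCoveredIn (G : SimpleGraph V) (A : Finset V) : Prop :=
  ∀ S, IsMaxIndepIn G A S → S.card = alphaIn G A

/-- The induced subgraph of `G` on `A` is in the class `W₂`. -/
def W2In (G : SimpleGraph V) (A : Finset V) : Prop :=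
  WellCoveredIn G A ∧
    ∀ x ∈ A, WellCoveredIn G (A.erase x) ∧ alphaIn G (A.erase x) = alphaIn G A

open scoped Classical in
/-- The neighborhood of a vertex `a` in `G`, as a `Finset`. -/
noncomputable def nbr (G : SimpleGraph V) (a : V) : Finset V :=
  univ.filter (fun v => G.Adj a v)

open scoped Classical in
/-- The neighborhood `N_G(S)` of a set `S` of vertices: vertices outside `S`
adjacent to some vertex of `S`. -/
noncomputable def nbrSet (G : SimpleGraph V) (S : Finset V) : Finset V :=
  univ.filter (fun v => v ∉ S ∧ ∃ u ∈ S, G.Adj u v)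

/-- The vertex set of the localization `G_S = G \ (S ∪ N_G(S))`. -/
noncomputable def loc (G : SimpleGraph V) (S : Finset V) : Finset V :=
  univ \ (S ∪ nbrSet G S)

/-- The vertex set of `G_{ab} = G \ (N_G(a) ∪ N_G(b))`. -/
noncomputable def locE (G : SimpleGraph V) (a b : V) : Finset V :=
  univ \ (nbr G a ∪ nbr G b)

/-- The induced subgraph of `G` on `A` has no isolated vertices. -/
def NoIsolatedIn (G : SimpleGraph V) (A : Finset V) : Prop :=
  ∀ v ∈ A, ∃ u ∈ A, G.Adj v u

open scoped Classical in
/-- The reduced Euler characteristic `∑_{F} (-1)^{|F|-1}` (the empty face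
contributing `-1`) of the independence complex of the induced subgraph of `G` on `A`. -/
noncomputable def indEuler (G : SimpleGraph V) (A : Finset V) : ℤ :=
  -∑ S ∈ (A.powerset).filter (fun S => IsIndep G S), (-1 : ℤ) ^ S.card

end EdgeIdealPaper

/-!
Write `E(A) = ∑ (-1)^|S|` over the independent subsets `S` of `A`, so that the reduced Euler
characteristic is `-E`. Splitting off a vertex `a` gives `E(A) = E(A \ a) - E(A \ N[a])`, and
`W₂` passes to `A \ N[a]` with `α` dropping by one. In a triangle-free `W₂` graph `E(A \ a) = 0`:
group the independent sets of `A \ a` by their part `S` avoiding `N(a)`; the rest is an arbitrary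
subset of the independent set of neighbours of `a` with no neighbour in `S`. That set is never
empty, since otherwise a maximal extension of `S` in `A \ N[a]` would be a maximal independent
set of `A \ a` of size `α - 1`. Hence `E(A) = (-1)^α(A)` by induction, and the link of a face `F`
is the independence complex of `G_F`, again a triangle-free `W₂` graph.
-/

section EulerianW2

variable {V : Type*} {G : SimpleGraph V} {A L S T : Finset V} {a : V}

open scoped Classical in
noncomputable def indepSets (G : SimpleGraph V) (A : Finset V) : Finset (Finset V) :=
  A.powerset.filter (IsIndep G)

noncomputable def eulerSum (G : SimpleGraph V) (A : Finset V) : ℤ :=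
  ∑ S ∈ indepSets G A, (-1 : ℤ) ^ S.card

lemma indEuler_eq_neg_eulerSum (G : SimpleGraph V) (A : Finset V) :
    indEuler G A = -eulerSum G A := rfl

lemma mem_indepSets : S ∈ indepSets G A ↔ S ⊆ A ∧ IsIndep G S := by
  classical
  simp [indepSets]

lemma IsIndep.mono (h : IsIndep G S) (hTS : T ⊆ S) : IsIndep G T :=
  fun u hu v hv => h u (hTS hu) v (hTS hv)

lemma isIndep_empty : IsIndep G (∅ : Finset V) := by
  simp [IsIndep]

lemma card_le_alphaIn (hSA : S ⊆ A) (hS : IsIndep G S) : S.card ≤ alphaIn G A :=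
  le_sup (f := Finset.card) (mem_indepSets.mpr ⟨hSA, hS⟩)

lemma exists_indep_card_eq_alphaIn (G : SimpleGraph V) (A : Finset V) :
    ∃ S, S ⊆ A ∧ IsIndep G S ∧ S.card = alphaIn G A := by
  obtain ⟨S, hS, hcard⟩ := exists_mem_eq_sup (indepSets G A)
    ⟨∅, mem_indepSets.mpr ⟨empty_subset A, isIndep_empty⟩⟩ Finset.card
  exact ⟨S, (mem_indepSets.mp hS).1, (mem_indepSets.mp hS).2, hcard.symm⟩

lemma indepSets_of_isIndep (hS : IsIndep G S) : indepSets G S = S.powerset := by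
  ext T
  rw [mem_indepSets, mem_powerset]
  exact ⟨And.left, fun hT => ⟨hT, hS.mono hT⟩⟩

variable [DecidableEq V]

open scoped Classical in
/-- `A \ N[S]`: the independence complex of `G` on it is the link of the face `S`. -/
noncomputable def linkIn (G : SimpleGraph V) (A S : Finset V) : Finset V :=
  (A \ S).filter fun v => ∀ u ∈ S, ¬ G.Adj u v

lemma mem_linkIn {v : V} : v ∈ linkIn G A S ↔ v ∈ A ∧ v ∉ S ∧ ∀ u ∈ S, ¬ G.Adj u v := by
  classical
  simp [linkIn, and_assoc]

lemma isIndep_insert : IsIndep G (insert a S) ↔ IsIndep G S ∧ ∀ v ∈ S, ¬ G.Adj a v := by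
  refine ⟨fun h => ⟨h.mono (subset_insert a S), fun v hv => h a (mem_insert_self a S) v
    (mem_insert_of_mem hv)⟩, fun ⟨hS, ha⟩ u hu v hv => ?_⟩
  rcases mem_insert.mp hu with rfl | hu' <;> rcases mem_insert.mp hv with rfl | hv'
  · exact G.irrefl
  · exact ha v hv'
  · exact fun h => ha u hu' h.symm
  · exact hS u hu' v hv'

lemma isIndep_union : IsIndep G (S ∪ T) ↔
    IsIndep G S ∧ IsIndep G T ∧ ∀ u ∈ S, ∀ v ∈ T, ¬ G.Adj u v := by
  refine ⟨fun h => ⟨h.mono subset_union_left, h.mono subset_union_right,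
    fun u hu v hv => h u (mem_union_left T hu) v (mem_union_right S hv)⟩,
    fun ⟨hS, hT, hST⟩ u hu v hv => ?_⟩
  rcases mem_union.mp hu with hu | hu <;> rcases mem_union.mp hv with hv | hv
  · exact hS u hu v hv
  · exact hST u hu v hv
  · exact fun h => hST v hv u hu h.symm
  · exact hT u hu v hv

lemma isIndep_of_forall_adj (htf : G.CliqueFree 3) (h : ∀ v ∈ S, G.Adj a v) : IsIndep G S :=
  fun u hu v hv huv => htf {a, u, v} <|
    SimpleGraph.is3Clique_iff.mpr ⟨a, u, v, h u hu, h v hv, huv, rfl⟩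

lemma IsIndep.exists_isMaxIndepIn (hSA : S ⊆ A) (hS : IsIndep G S) :
    ∃ T, S ⊆ T ∧ IsMaxIndepIn G A T := by
  obtain ⟨T, hST, hT, hmax⟩ := (indepSets G A).exists_le_maximal (mem_indepSets.mpr ⟨hSA, hS⟩)
  obtain ⟨hTA, hTind⟩ := mem_indepSets.mp hT
  refine ⟨T, hST, hTA, hTind, fun v hv hvT hins => hvT ?_⟩
  exact hmax (mem_indepSets.mpr ⟨insert_subset hv hTA, hins⟩) (subset_insert v T)
    (mem_insert_self v T)

lemma linkIn_subset : linkIn G A S ⊆ A := fun _ hv => (mem_linkIn.mp hv).1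

lemma linkIn_empty : linkIn G A ∅ = A := by
  ext v
  simp [mem_linkIn]

lemma linkIn_linkIn : linkIn G (linkIn G A S) {a} = linkIn G A (insert a S) := by
  ext v
  simp only [mem_linkIn, mem_singleton, mem_insert, forall_eq, forall_eq_or_imp]
  tauto

lemma linkIn_erase : (linkIn G A S).erase a = linkIn G (A.erase a) S := by
  ext v
  simp only [mem_erase, mem_linkIn]
  tauto

lemma IsMaxIndepIn.insert (ha : a ∈ A) (hS : IsMaxIndepIn G (linkIn G A {a}) S) :
    IsMaxIndepIn G A (insert a S) := by
  obtain ⟨hSsub, hind, hmax⟩ := hS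
  have hmem : ∀ v ∈ S, v ∈ A ∧ v ≠ a ∧ ¬ G.Adj a v := fun v hv => by
    simpa using mem_linkIn.mp (hSsub hv)
  refine ⟨insert_subset ha fun v hv => (hmem v hv).1,
    isIndep_insert.mpr ⟨hind, fun v hv => (hmem v hv).2.2⟩, fun v hvA hvS hins => ?_⟩
  rw [insert_comm, isIndep_insert] at hins
  have hva : v ≠ a := fun h => hvS (h ▸ mem_insert_self a S)
  have hav : ¬ G.Adj a v := hins.2 v (mem_insert_self v S)
  exact hmax v (mem_linkIn.mpr ⟨hvA, by simpa using hva, by simpa using hav⟩)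
    (fun h => hvS (mem_insert_of_mem h)) hins.1

lemma WellCoveredIn.linkIn_singleton (hwc : WellCoveredIn G A) (ha : a ∈ A) :
    WellCoveredIn G (linkIn G A {a}) ∧ alphaIn G (linkIn G A {a}) + 1 = alphaIn G A := by
  have hcard : ∀ S, IsMaxIndepIn G (linkIn G A {a}) S → S.card + 1 = alphaIn G A := by
    intro S hS
    have haS : a ∉ S := fun h => by simpa using (mem_linkIn.mp (hS.1 h)).2.1
    rw [← card_insert_of_notMem haS]
    exact hwc _ (hS.insert ha)
  obtain ⟨S, hSsub, hSind, hScard⟩ := exists_indep_card_eq_alphaIn G (linkIn G A {a})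
  obtain ⟨T, hST, hT⟩ := hSind.exists_isMaxIndepIn hSsub
  have hTle := card_le_alphaIn hT.1 hT.2.1
  have hST := card_le_card hST
  have hTcard := hcard T hT
  refine ⟨fun S hS => ?_, by omega⟩
  have := hcard S hS
  omega

lemma W2In.linkIn_singleton (hw : W2In G A) (ha : a ∈ A) :
    W2In G (linkIn G A {a}) ∧ alphaIn G (linkIn G A {a}) + 1 = alphaIn G A := by
  obtain ⟨hwc, hdel⟩ := hw
  obtain ⟨hwcL, hαL⟩ := hwc.linkIn_singleton ha
  refine ⟨⟨hwcL, fun y hy => ?_⟩, hαL⟩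
  obtain ⟨hyA, hya, -⟩ := mem_linkIn.mp hy
  obtain ⟨hwcy, hαy⟩ := hdel y hyA
  obtain ⟨hwcyL, hαyL⟩ :=
    hwcy.linkIn_singleton (mem_erase.mpr ⟨fun h => hya (by simp [h]), ha⟩)
  rw [← linkIn_erase] at hwcyL hαyL
  exact ⟨hwcyL, by omega⟩

lemma W2In.linkIn_of_isIndep (hw : W2In G A) (hSA : S ⊆ A) (hS : IsIndep G S) :
    W2In G (linkIn G A S) := by
  induction S using Finset.induction_on with
  | empty => rwa [linkIn_empty]
  | insert a S haS ih =>
    have hS' := isIndep_insert.mp hS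
    rw [← linkIn_linkIn]
    refine ((ih ((subset_insert a S).trans hSA) hS'.1).linkIn_singleton ?_).1
    exact mem_linkIn.mpr ⟨hSA (mem_insert_self a S), haS, fun u hu h => hS'.2 u hu h.symm⟩

lemma W2In.exists_adj_forall_not_adj (hw : W2In G A) (ha : a ∈ A) (hSsub : S ⊆ linkIn G A {a})
    (hS : IsIndep G S) : ∃ b ∈ A, G.Adj a b ∧ ∀ u ∈ S, ¬ G.Adj u b := by
  by_contra! hcon
  obtain ⟨T, hST, hTsub, hTind, hTmax⟩ := hS.exists_isMaxIndepIn hSsub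
  have hTmax' : IsMaxIndepIn G (A.erase a) T := by
    refine ⟨fun v hv => ?_, hTind, fun v hv hvT hins => ?_⟩
    · obtain ⟨hvA, hva, -⟩ := mem_linkIn.mp (hTsub hv)
      exact mem_erase.mpr ⟨by simpa using hva, hvA⟩
    · obtain ⟨hva, hvA⟩ := mem_erase.mp hv
      by_cases hav : G.Adj a v
      · obtain ⟨u, hu, huv⟩ := hcon v hvA hav
        exact (isIndep_insert.mp hins).2 u (hST hu) huv.symm
      · exact hTmax v (mem_linkIn.mpr ⟨hvA, by simpa using hva, by simpa using hav⟩) hvT hins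
  have hT := hw.2 a ha
  have hTcard := hT.1 T hTmax'
  have hTle := card_le_alphaIn hTsub hTind
  have hαL := (hw.1.linkIn_singleton ha).2
  omega

lemma eulerSum_of_isIndep (hS : IsIndep G S) : eulerSum G S = if S = ∅ then 1 else 0 := by
  rw [eulerSum, indepSets_of_isIndep hS, sum_powerset_neg_one_pow_card]

lemma disjoint_linkIn_sdiff : Disjoint (linkIn G (A \ L) S) L :=
  disjoint_left.mpr fun _ hv => (mem_sdiff.mp (mem_linkIn.mp hv).1).2

/-- Each independent set of `A` is split into its part `S` in `L` and an independent set of the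
vertices of `A \ L` with no neighbour in `S`. -/
theorem eulerSum_eq_sum_indepSets (hL : L ⊆ A) :
    eulerSum G A = ∑ S ∈ indepSets G L, (-1 : ℤ) ^ S.card * eulerSum G (linkIn G (A \ L) S) := by
  rw [eulerSum, ← sum_fiberwise_of_maps_to (g := fun S => S ∩ L) fun S hS => mem_indepSets.mpr
    ⟨inter_subset_right, (mem_indepSets.mp hS).2.mono inter_subset_left⟩]
  refine sum_congr rfl fun S hS => ?_
  obtain ⟨hSL, hSind⟩ := mem_indepSets.mp hS
  rw [eulerSum, mul_sum]
  refine sum_nbij' (fun U => U \ L) (fun T => S ∪ T) ?_ ?_ ?_ ?_ ?_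
  · intro U hU
    simp only [mem_filter, mem_indepSets] at hU ⊢
    obtain ⟨⟨hUA, hUind⟩, rfl⟩ := hU
    refine ⟨fun v hv => ?_, hUind.mono sdiff_subset⟩
    obtain ⟨hvU, hvL⟩ := mem_sdiff.mp hv
    exact mem_linkIn.mpr ⟨mem_sdiff.mpr ⟨hUA hvU, hvL⟩, fun h => hvL (mem_inter.mp h).2,
      fun u hu => hUind u (mem_inter.mp hu).1 v hvU⟩
  · intro T hT
    simp only [mem_filter, mem_indepSets] at hT ⊢
    obtain ⟨hTsub, hTind⟩ := hT
    have hTL := disjoint_linkIn_sdiff.mono_left hTsub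
    refine ⟨⟨union_subset (hSL.trans hL) (hTsub.trans (linkIn_subset.trans sdiff_subset)),
      isIndep_union.mpr ⟨hSind, hTind, fun u hu v hv => (mem_linkIn.mp (hTsub hv)).2.2 u hu⟩⟩, ?_⟩
    rw [union_inter_distrib_right, inter_eq_left.mpr hSL, disjoint_iff_inter_eq_empty.mp hTL,
      union_empty]
  · intro U hU
    simp only [mem_filter] at hU
    rw [← hU.2]
    exact sup_inf_sdiff U L
  · intro T hT
    simp only [mem_indepSets] at hT
    rw [union_sdiff_distrib, sdiff_eq_empty_iff_subset.mpr hSL, empty_union,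
      sdiff_eq_self_of_disjoint (disjoint_linkIn_sdiff.mono_left hT.1)]
  · intro U hU
    simp only [mem_filter] at hU
    rw [← pow_add, ← hU.2, card_inter_add_card_sdiff]

lemma indepSets_singleton (G : SimpleGraph V) (a : V) : indepSets G {a} = {∅, {a}} := by
  rw [indepSets_of_isIndep fun u hu v hv => by simp_all]
  ext S
  simp [subset_singleton_iff]

lemma eulerSum_eq_sub (ha : a ∈ A) :
    eulerSum G A = eulerSum G (A.erase a) - eulerSum G (linkIn G A {a}) := by
  have hlink : linkIn G (A.erase a) {a} = linkIn G A {a} := by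
    ext v
    simp only [mem_linkIn, mem_erase, mem_singleton]
    tauto
  rw [eulerSum_eq_sum_indepSets (singleton_subset_iff.mpr ha), indepSets_singleton,
    sum_pair (singleton_ne_empty a).symm, linkIn_empty, sdiff_singleton_eq_erase, hlink]
  simp [sub_eq_add_neg]

lemma W2In.eulerSum_erase_eq_zero (htf : G.CliqueFree 3) (hw : W2In G A) (ha : a ∈ A) :
    eulerSum G (A.erase a) = 0 := by
  have hL : linkIn G A {a} ⊆ A.erase a := fun v hv => by
    obtain ⟨hvA, hva, -⟩ := mem_linkIn.mp hv
    exact mem_erase.mpr ⟨by simpa using hva, hvA⟩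
  rw [eulerSum_eq_sum_indepSets hL]
  refine sum_eq_zero fun S hS => ?_
  obtain ⟨hSsub, hSind⟩ := mem_indepSets.mp hS
  obtain ⟨b, hbA, hab, hb⟩ := hw.exists_adj_forall_not_adj ha hSsub hSind
  have hadj : ∀ v ∈ linkIn G (A.erase a \ linkIn G A {a}) S, G.Adj a v := fun v hv => by
    by_contra hav
    obtain ⟨hv, -⟩ := mem_linkIn.mp hv
    obtain ⟨hvA, hvL⟩ := mem_sdiff.mp hv
    obtain ⟨hva, hvA⟩ := mem_erase.mp hvA
    exact hvL (mem_linkIn.mpr ⟨hvA, by simpa using hva, by simpa using hav⟩)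
  have hbS : b ∈ linkIn G (A.erase a \ linkIn G A {a}) S := by
    have hbL : b ∉ linkIn G A {a} := fun h => by simpa [hab] using (mem_linkIn.mp h).2.2
    refine mem_linkIn.mpr ⟨mem_sdiff.mpr ⟨mem_erase.mpr ⟨hab.ne', hbA⟩, hbL⟩,
      fun h => hbL (hSsub h), hb⟩
  rw [eulerSum_of_isIndep (isIndep_of_forall_adj htf hadj), if_neg (ne_empty_of_mem hbS),
    mul_zero]

lemma W2In.eulerSum_eq_neg_one_pow_alphaIn (htf : G.CliqueFree 3) (hw : W2In G A) :
    eulerSum G A = (-1) ^ alphaIn G A := by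
  induction A using Finset.strongInduction with
  | H A ih =>
    obtain rfl | ⟨a, ha⟩ := A.eq_empty_or_nonempty
    · obtain ⟨S, hS, -, hcard⟩ := exists_indep_card_eq_alphaIn G (∅ : Finset V)
      rw [eulerSum_of_isIndep isIndep_empty, if_pos rfl, ← hcard, subset_empty.mp hS, card_empty,
        pow_zero]
    · obtain ⟨hwL, hαL⟩ := hw.linkIn_singleton ha
      have hLA : linkIn G A {a} ⊂ A := (ssubset_iff_of_subset linkIn_subset).mpr
        ⟨a, ha, fun h => by simpa using (mem_linkIn.mp h).2.1⟩
      rw [eulerSum_eq_sub ha, hw.eulerSum_erase_eq_zero htf ha, ih _ hLA hwL, ← hαL, pow_succ]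
      ring

lemma loc_eq_linkIn [Fintype V] (G : SimpleGraph V) (F : Finset V) : loc G F = linkIn G univ F := by
  ext v
  simp only [loc, nbrSet, mem_sdiff, mem_union, mem_filter, mem_linkIn, mem_univ, true_and,
    not_or, not_and, not_exists]
  tauto

end EulerianW2

section EdgeIdealPaper

variable {V : Type*} [Fintype V] [DecidableEq V]

/-- If `G` is a triangle-free graph in `W₂`, then its independence complex is
Eulerian: it is pure, and for every face `F` (i.e. every independent set) the
reduced Euler characteristic of the link of `F` equals `(-1)^{dim lk F}`,
that is, `-(-1)^{α(G_F)}`. -/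
theorem stmt8 (G : SimpleGraph V) (htf : G.CliqueFree 3)
    (hw2 : W2In G Finset.univ) :
    WellCoveredIn G Finset.univ ∧
      ∀ F : Finset V, IsIndep G F →
        indEuler G (loc G F) = -(-1 : ℤ) ^ alphaIn G (loc G F) := by
  refine ⟨hw2.1, fun F hF => ?_⟩
  rw [indEuler_eq_neg_eulerSum, loc_eq_linkIn,
    (hw2.linkIn_of_isIndep (subset_univ F) hF).eulerSum_eq_neg_one_pow_alphaIn htf]

end EdgeIdealPaper
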